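/- For 9 ≤ d ≤ 12, the degree-d graded component of ℤ[h,s]/(3hs² − 6h⁵s + 2h⁹, s³ − 12h⁸s + 5h¹²) (deg h = 1, deg s = 4) is isomorphic as a ℤ-module to ℤ³/ℤ·(3,−6,2), and this quotient is a free ℤ-module of rank 2. -/

import Mathlib

open MvPolynomial

/-- The defining ideal of the Chow ring of the Cayley plane, `h = X 0`, `s = X 1`. -/
noncomputable abbrev cayleyIdeal : Ideal (MvPolynomial (Fin 2) ℤ) :=
  Ideal.span ({3 * X 0 * X 1 ^ 2 - 6 * X 0 ^ 5 * X 1 + 2 * X 0 ^ 9,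
               X 1 ^ 3 - 12 * X 0 ^ 8 * X 1 + 5 * X 0 ^ 12} :
    Set (MvPolynomial (Fin 2) ℤ))

/-- The degree-`d` graded component of the Chow ring of the Cayley plane
(grading `deg h = 1`, `deg s = 4`). -/
noncomputable abbrev cayleyComponent (d : ℕ) :
    Submodule ℤ (MvPolynomial (Fin 2) ℤ ⧸ cayleyIdeal) :=
  Submodule.map (Ideal.Quotient.mkₐ ℤ cayleyIdeal).toLinearMap
    (weightedHomogeneousSubmodule ℤ (![1, 4] : Fin 2 → ℕ) d)


/-!
In weight `d ∈ [9, 12]` the monomials are `h^(d-8)s², h^(d-4)s, h^d` and, for `d = 12`, `s³`,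
which the second relation rewrites as `12h⁸s − 5h¹²`; so the three monomials span the component.
Reading off the coordinates of every weight-`d` monomial in these three gives a left inverse
`middleCoord d` of `middleMonomials d`, and it maps the ideal into `ℤ·(3,−6,2)`: in weight
`d ≤ 12` the only monomial multiple of the first relation is `h^(d−9)` times it, and the only one
of the second relation is the relation itself, whose coordinates cancel. Finally `(3,−6,2)` pairs
to `1` with `(1,0,−1)`, so the quotient is torsion-free, hence free of rank `3 − 1`.
-/

section SpanSingleton

variable {R M : Type*} [CommRing R] [IsDomain R] [AddCommGroup M] [Module R M]
  [Module.IsTorsionFree R M]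

theorem Module.IsTorsionFree.quotient_span_singleton {v : M} {f : M →ₗ[R] R} (hf : f v = 1) :
    Module.IsTorsionFree R (M ⧸ R ∙ v) := by
  refine Module.IsTorsionFree.of_smul_eq_zero fun r x hrx => or_iff_not_imp_left.mpr fun hr => ?_
  induction x using Submodule.Quotient.induction_on with | _ x
  rw [← Submodule.Quotient.mk_smul, Submodule.Quotient.mk_eq_zero,
    Submodule.mem_span_singleton] at hrx
  obtain ⟨t, ht⟩ := hrx
  have ht' : t = r * f x := by simpa [hf] using congr_arg f ht
  rw [Submodule.Quotient.mk_eq_zero, Submodule.mem_span_singleton]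
  refine ⟨f x, smul_right_injective M hr ?_⟩
  simp only [smul_smul, ← ht', ht]

theorem Submodule.finrank_quotient_span_singleton [Module.Finite R M] {v : M} (hv : v ≠ 0) :
    Module.finrank R (M ⧸ R ∙ v) = Module.finrank R M - 1 := by
  rw [Submodule.finrank_quotient, ← (LinearEquiv.toSpanNonzeroSingleton R M v hv).finrank_eq,
    Module.finrank_self]

end SpanSingleton

namespace MvPolynomial

theorem restrictScalars_span_le_comap_of_monomial_mul_mem {σ R M : Type*} [CommSemiring R] [AddCommMonoid M]
    [Module R M] {L : MvPolynomial σ R →ₗ[R] M} {N : Submodule R M} {S : Set (MvPolynomial σ R)}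
    (h : ∀ q ∈ S, ∀ u, L (monomial u 1 * q) ∈ N) :
    (Ideal.span S).restrictScalars R ≤ N.comap L := by
  suffices ∀ p ∈ Ideal.span S, ∀ a, L (a * p) ∈ N from fun p hp => by simpa using this p hp 1
  intro p hp
  induction hp using Submodule.span_induction with
  | mem q hq =>
    intro a
    induction a using MvPolynomial.induction_on' with
    | monomial u c =>
      rw [show monomial u c = c • monomial u 1 by rw [smul_monomial, smul_eq_mul, mul_one],
        smul_mul_assoc, map_smul]
      exact N.smul_mem c (h q hq u)
    | add a b ha hb => rw [add_mul, map_add]; exact N.add_mem ha hb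
  | zero => simp
  | add x y _ _ hx hy => intro a; rw [mul_add, map_add]; exact N.add_mem (hx a) (hy a)
  | smul b x _ hx => intro a; rw [smul_eq_mul, ← mul_assoc]; exact hx (a * b)

end MvPolynomial

namespace Cayley

section Exponents

variable {R : Type*} [CommSemiring R]

noncomputable abbrev hsExp (a b : ℕ) : Fin 2 →₀ ℕ := Finsupp.single 0 a + Finsupp.single 1 b

@[simp] lemma hsExp_zero (a b : ℕ) : hsExp a b 0 = a := by simp [hsExp]

@[simp] lemma hsExp_one (a b : ℕ) : hsExp a b 1 = b := by simp [hsExp]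

lemma eq_hsExp (m : Fin 2 →₀ ℕ) : m = hsExp (m 0) (m 1) := by
  ext i; fin_cases i <;> simp

lemma monomial_hsExp (a b : ℕ) :
    monomial (hsExp a b) (1 : R) = X 0 ^ a * X 1 ^ b := by
  rw [X_pow_eq_monomial, X_pow_eq_monomial, monomial_mul, one_mul]

lemma monomial_eq_X_pow_mul_X_pow (u : Fin 2 →₀ ℕ) :
    monomial u (1 : R) = X 0 ^ u 0 * X 1 ^ u 1 := by
  rw [← monomial_hsExp, ← eq_hsExp]

lemma weight_hsExp (a b : ℕ) : Finsupp.weight ![1, 4] (hsExp a b) = a + 4 * b := by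
  simp [hsExp, Finsupp.weight_single, mul_comm]

end Exponents

noncomputable def middleMonomials (d : ℕ) : (Fin 3 → ℤ) →ₗ[ℤ] MvPolynomial (Fin 2) ℤ :=
  Fintype.linearCombination ℤ ![X 0 ^ (d - 8) * X 1 ^ 2, X 0 ^ (d - 4) * X 1, X 0 ^ d]

lemma middleMonomials_apply (d : ℕ) (x : Fin 3 → ℤ) : middleMonomials d x =
    x 0 • (X 0 ^ (d - 8) * X 1 ^ 2) + x 1 • (X 0 ^ (d - 4) * X 1) + x 2 • X 0 ^ d := by
  simp [middleMonomials, Fintype.linearCombination_apply, Fin.sum_univ_three]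

lemma middleMonomials_mem {d : ℕ} (hd : 8 ≤ d) (x : Fin 3 → ℤ) :
    middleMonomials d x ∈ weightedHomogeneousSubmodule ℤ ![1, 4] d := by
  have hom (a b : ℕ) (hab : a + 4 * b = d) :
      X 0 ^ a * X 1 ^ b ∈ weightedHomogeneousSubmodule ℤ ![1, 4] d := by
    rw [← monomial_hsExp, mem_weightedHomogeneousSubmodule]
    exact isWeightedHomogeneous_monomial _ _ _ (by rw [weight_hsExp, hab])
  have h₁ := hom (d - 4) 1 (by omega)
  have h₀ := hom d 0 (by omega)
  rw [pow_one] at h₁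
  rw [pow_zero, mul_one] at h₀
  rw [middleMonomials_apply]
  exact add_mem (add_mem (Submodule.smul_mem _ _ (hom (d - 8) 2 (by omega)))
    (Submodule.smul_mem _ _ h₁)) (Submodule.smul_mem _ _ h₀)

lemma middleMonomials_relation_mem {d : ℕ} (hd : 9 ≤ d) :
    middleMonomials d ![3, -6, 2] ∈ cayleyIdeal := by
  have : middleMonomials d ![3, -6, 2] =
      X 0 ^ (d - 9) * (3 * X 0 * X 1 ^ 2 - 6 * X 0 ^ 5 * X 1 + 2 * X 0 ^ 9) := by
    obtain ⟨k, rfl⟩ := Nat.exists_eq_add_of_le' hd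
    simp only [middleMonomials_apply, show k + 9 - 8 = k + 1 by omega,
      show k + 9 - 4 = k + 5 by omega, Nat.add_sub_cancel, Matrix.cons_val, zsmul_eq_mul]
    push_cast
    ring
  rw [this]
  exact Ideal.mul_mem_left _ _ (Ideal.subset_span (Set.mem_insert _ _))

/-- `sPowCoord b` are the coordinates of `h^(d-4b) s^b` in terms of `middleMonomials d`; for
`b = 3` they come from `s³ ≡ 12h⁸s − 5h¹²`. -/
def sPowCoord : ℕ → Fin 3 → ℤ
  | 0 => ![0, 0, 1]
  | 1 => ![0, 1, 0]
  | 2 => ![1, 0, 0]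
  | 3 => ![0, 12, -5]
  | _ => 0

noncomputable def middleCoord (d : ℕ) : MvPolynomial (Fin 2) ℤ →ₗ[ℤ] (Fin 3 → ℤ) :=
  (basisMonomials (Fin 2) ℤ).constr ℤ fun m => if m 0 + 4 * m 1 = d then sPowCoord (m 1) else 0

lemma middleCoord_X_pow_mul_X_pow (d a b : ℕ) :
    middleCoord d (X 0 ^ a * X 1 ^ b) = if a + 4 * b = d then sPowCoord b else 0 := by
  rw [← monomial_hsExp, ← congrFun (coe_basisMonomials _ _), middleCoord,
    Module.Basis.constr_basis, hsExp_zero, hsExp_one]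

lemma middleCoord_middleMonomials {d : ℕ} (hd : 8 ≤ d) (x : Fin 3 → ℤ) :
    middleCoord d (middleMonomials d x) = x := by
  have e₂ := middleCoord_X_pow_mul_X_pow d (d - 8) 2
  have e₁ := middleCoord_X_pow_mul_X_pow d (d - 4) 1
  have e₀ := middleCoord_X_pow_mul_X_pow d d 0
  rw [pow_one] at e₁
  rw [pow_zero, mul_one] at e₀
  rw [middleMonomials_apply, map_add, map_add, map_smul, map_smul, map_smul, e₀, e₁, e₂,
    if_pos (by omega), if_pos (by omega), if_pos (by omega)]
  funext i; fin_cases i <;> simp [sPowCoord]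

lemma middleCoord_monomial_mul_rel₁_mem {d : ℕ} (hd : d ≤ 12) (u : Fin 2 →₀ ℕ) :
    middleCoord d (monomial u 1 * (3 * X 0 * X 1 ^ 2 - 6 * X 0 ^ 5 * X 1 + 2 * X 0 ^ 9)) ∈
      ℤ ∙ ![3, -6, 2] := by
  have expand : monomial u (1 : ℤ) * (3 * X 0 * X 1 ^ 2 - 6 * X 0 ^ 5 * X 1 + 2 * X 0 ^ 9) =
      (3 : ℤ) • (X 0 ^ (u 0 + 1) * X 1 ^ (u 1 + 2)) - (6 : ℤ) • (X 0 ^ (u 0 + 5) * X 1 ^ (u 1 + 1))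
        + (2 : ℤ) • (X 0 ^ (u 0 + 9) * X 1 ^ u 1) := by
    rw [monomial_eq_X_pow_mul_X_pow]
    simp only [zsmul_eq_mul, Int.cast_ofNat]
    ring
  rw [expand, map_add, map_sub, map_smul, map_smul, map_smul, middleCoord_X_pow_mul_X_pow,
    middleCoord_X_pow_mul_X_pow, middleCoord_X_pow_mul_X_pow]
  by_cases hu : u 0 + 4 * u 1 + 9 = d
  · obtain hu₁ : u 1 = 0 := by omega
    rw [if_pos (by omega), if_pos (by omega), if_pos (by omega), hu₁]
    convert Submodule.mem_span_singleton_self _ using 1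
    funext i; fin_cases i <;> simp [sPowCoord]
  · rw [if_neg (by omega), if_neg (by omega), if_neg (by omega)]
    simp

lemma middleCoord_monomial_mul_rel₂ {d : ℕ} (hd : d < 16) (u : Fin 2 →₀ ℕ) :
    middleCoord d (monomial u 1 * (X 1 ^ 3 - 12 * X 0 ^ 8 * X 1 + 5 * X 0 ^ 12)) = 0 := by
  have expand : monomial u (1 : ℤ) * (X 1 ^ 3 - 12 * X 0 ^ 8 * X 1 + 5 * X 0 ^ 12) =
      X 0 ^ u 0 * X 1 ^ (u 1 + 3) - (12 : ℤ) • (X 0 ^ (u 0 + 8) * X 1 ^ (u 1 + 1))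
        + (5 : ℤ) • (X 0 ^ (u 0 + 12) * X 1 ^ u 1) := by
    rw [monomial_eq_X_pow_mul_X_pow]
    simp only [zsmul_eq_mul, Int.cast_ofNat]
    ring
  rw [expand, map_add, map_sub, map_smul, map_smul, middleCoord_X_pow_mul_X_pow,
    middleCoord_X_pow_mul_X_pow, middleCoord_X_pow_mul_X_pow]
  by_cases hu : u 0 + 4 * u 1 + 12 = d
  · obtain hu₁ : u 1 = 0 := by omega
    rw [if_pos (by omega), if_pos (by omega), if_pos (by omega), hu₁]
    funext i; fin_cases i <;> simp [sPowCoord]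
  · rw [if_neg (by omega), if_neg (by omega), if_neg (by omega)]
    simp

lemma cayleyIdeal_le_comap_middleCoord {d : ℕ} (hd : d ≤ 12) :
    cayleyIdeal.restrictScalars ℤ ≤ (ℤ ∙ ![3, -6, 2]).comap (middleCoord d) := by
  refine MvPolynomial.restrictScalars_span_le_comap_of_monomial_mul_mem fun q hq u => ?_
  rcases hq with rfl | rfl
  · exact middleCoord_monomial_mul_rel₁_mem hd u
  · rw [middleCoord_monomial_mul_rel₂ (by omega) u]
    exact zero_mem _

lemma X_pow_mul_X_pow_sub_middleMonomials_mem {a b : ℕ} (hab : a + 4 * b < 16) :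
    X 0 ^ a * X 1 ^ b - middleMonomials (a + 4 * b) (sPowCoord b) ∈ cayleyIdeal := by
  obtain hb | rfl : b ≤ 2 ∨ b = 3 := by omega
  · interval_cases b <;> simp [middleMonomials_apply, sPowCoord]
  · have : X 0 ^ a * X 1 ^ 3 - middleMonomials (a + 4 * 3) (sPowCoord 3) =
        X 0 ^ a * (X 1 ^ 3 - 12 * X 0 ^ 8 * X 1 + 5 * X 0 ^ 12) := by
      simp only [middleMonomials_apply, sPowCoord, show a + 4 * 3 - 4 = a + 8 by omega,
        Matrix.cons_val, zsmul_eq_mul]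
      push_cast
      ring
    rw [this]
    exact Ideal.mul_mem_left _ _ (Ideal.subset_span (Set.mem_insert_of_mem _ rfl))

lemma sub_middleMonomials_middleCoord_mem {d : ℕ} (hd : d < 16) {p : MvPolynomial (Fin 2) ℤ}
    (hp : p ∈ weightedHomogeneousSubmodule ℤ ![1, 4] d) :
    p - middleMonomials d (middleCoord d p) ∈ cayleyIdeal := by
  suffices weightedHomogeneousSubmodule ℤ ![1, 4] d ≤ (cayleyIdeal.restrictScalars ℤ).comap
      (LinearMap.id - middleMonomials d ∘ₗ middleCoord d) from this hp
  rw [weightedHomogeneousSubmodule_eq_finsupp_supported,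
    AddMonoidAlgebra.supported_eq_span_single, Submodule.span_le]
  rintro _ ⟨m, hm : Finsupp.weight ![1, 4] m = d, rfl⟩
  change monomial m 1 - middleMonomials d (middleCoord d (monomial m 1)) ∈ cayleyIdeal
  rw [eq_hsExp m, weight_hsExp] at hm
  rw [monomial_eq_X_pow_mul_X_pow, middleCoord_X_pow_mul_X_pow, if_pos hm, ← hm]
  exact X_pow_mul_X_pow_sub_middleMonomials_mem (by omega)

lemma range_mk_comp_middleMonomials {d : ℕ} (h8 : 8 ≤ d) (h15 : d < 16) :
    LinearMap.range ((Ideal.Quotient.mkₐ ℤ cayleyIdeal).toLinearMap ∘ₗ middleMonomials d) =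
      cayleyComponent d := by
  rw [LinearMap.range_comp]
  refine le_antisymm (Submodule.map_mono ?_) ?_
  · rintro _ ⟨x, rfl⟩
    exact middleMonomials_mem h8 x
  · rintro _ ⟨p, hp, rfl⟩
    refine ⟨middleMonomials d (middleCoord d p), ⟨_, rfl⟩, ?_⟩
    exact (Ideal.Quotient.eq.mpr (sub_middleMonomials_middleCoord_mem h15 hp)).symm

lemma ker_mk_comp_middleMonomials {d : ℕ} (h9 : 9 ≤ d) (h12 : d ≤ 12) :
    LinearMap.ker ((Ideal.Quotient.mkₐ ℤ cayleyIdeal).toLinearMap ∘ₗ middleMonomials d) =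
      ℤ ∙ ![3, -6, 2] := by
  refine le_antisymm (fun x hx => ?_) ?_
  · have hx : middleMonomials d x ∈ cayleyIdeal := Ideal.Quotient.eq_zero_iff_mem.mp hx
    simpa [middleCoord_middleMonomials (by omega : 8 ≤ d)] using
      cayleyIdeal_le_comap_middleCoord h12 hx
  · rw [Submodule.span_singleton_le_iff_mem, LinearMap.mem_ker]
    exact Ideal.Quotient.eq_zero_iff_mem.mpr (middleMonomials_relation_mem h9)

end Cayley

/-- For `9 ≤ d ≤ 12`, the degree-`d` component of the Chow ring of the Cayley plane is
isomorphic as a `ℤ`-module to `ℤ³/ℤ·(3,−6,2)`, a free `ℤ`-module of rank 2. -/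
theorem cayleyComponent_middle_degrees (d : ℕ) (h9 : 9 ≤ d) (h12 : d ≤ 12) :
    Nonempty (cayleyComponent d ≃ₗ[ℤ]
        ((Fin 3 → ℤ) ⧸ Submodule.span ℤ ({![3, -6, 2]} : Set (Fin 3 → ℤ)))) ∧
      Module.Free ℤ ((Fin 3 → ℤ) ⧸ Submodule.span ℤ ({![3, -6, 2]} : Set (Fin 3 → ℤ))) ∧
      Module.finrank ℤ
        ((Fin 3 → ℤ) ⧸ Submodule.span ℤ ({![3, -6, 2]} : Set (Fin 3 → ℤ))) = 2 := by
  have : Module.IsTorsionFree ℤ ((Fin 3 → ℤ) ⧸ ℤ ∙ ![3, -6, 2]) :=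
    Module.IsTorsionFree.quotient_span_singleton (f := Fintype.linearCombination ℤ ![1, 0, -1]) rfl
  refine ⟨⟨((Submodule.quotEquivOfEq _ _ (Cayley.ker_mk_comp_middleMonomials h9 h12)).symm ≪≫ₗ
    LinearMap.quotKerEquivRange _ ≪≫ₗ
    LinearEquiv.ofEq _ _ (Cayley.range_mk_comp_middleMonomials (by omega) (by omega))).symm⟩,
    inferInstance, ?_⟩
  rw [Submodule.finrank_quotient_span_singleton (by decide), Module.finrank_fin_fun]
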